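/- Let 0 < a < 1/2 and let z_a be the unique z ∈ (0,1) with F_a(z) = 0. Then there exists a nonconstant C² solution x: ℝ → ℝ of x″ = x(x−1)(x−a) such that (x(t), x′(t)) → (0,0) as t → ±∞, 0 < x(t) ≤ z_a for all t ∈ ℝ, and max_{t∈ℝ} x(t) = z_a (a homoclinic orbit to (0,0) crossing the positive x-semiaxis at (z_a, 0)). -/

import Mathlib

/-!
The homoclinic orbit is explicit: `x(t) = p / (cosh (√a t) + q)` solves `x'' = x(x-1)(x-a)`
exactly when `(1+a) p = 3 a q` and `p² = 2a(q² - 1)`, which for `0 < a < 1/2` has a solution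
with `0 < p < q`. The maximum `x(0) = p / (1+q)` is a zero of `F_a` in `(0,1)`, hence equals `z_a`,
and `x(t) → 0`, `x'(t) → 0` as `|t| → ∞` because `cosh` does.
-/

open Filter Set

noncomputable section

/-- The potential `F_a(x) = -x⁴/4 + (1+a)x³/3 - a x²/2`. -/
def Fa (a x : ℝ) : ℝ := -x ^ 4 / 4 + (1 + a) * x ^ 3 / 3 - a * x ^ 2 / 2

/-- `x` is a (C²) solution of the autonomous equation `x'' = x(x-1)(x-a)`,
with derivative `dx`. -/
def IsAutSol (a : ℝ) (x dx : ℝ → ℝ) : Prop :=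
  (∀ t : ℝ, HasDerivAt x (dx t) t) ∧
  (∀ t : ℝ, HasDerivAt dx (x t * (x t - 1) * (x t - a)) t)

open Real Topology

def coshPulse (p q ω t : ℝ) : ℝ := p / (cosh (ω * t) + q)

def coshPulseDeriv (p q ω t : ℝ) : ℝ := -(p * ω * sinh (ω * t)) / (cosh (ω * t) + q) ^ 2

lemma cosh_add_pos {q : ℝ} (hq : -1 < q) (s : ℝ) : 0 < cosh s + q := by
  linarith [one_le_cosh s]

lemma tendsto_cosh_cocompact : Tendsto cosh (cocompact ℝ) atTop := by
  refine tendsto_atTop_mono (f := fun s => (1 + ‖s‖) / 2) (fun s => ?_) ?_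
  · rw [Real.norm_eq_abs, ← cosh_abs, cosh_eq]
    linarith [add_one_le_exp |s|, exp_pos (-|s|)]
  · exact (tendsto_atTop_add_const_left _ _ tendsto_norm_cocompact_atTop).atTop_div_const two_pos

section Pulse

variable {a p q ω : ℝ}

lemma coshPulse_pos (hp : 0 < p) (hq : -1 < q) (t : ℝ) : 0 < coshPulse p q ω t :=
  div_pos hp (cosh_add_pos hq _)

lemma coshPulse_zero : coshPulse p q ω 0 = p / (1 + q) := by
  simp [coshPulse]

lemma coshPulse_le (hp : 0 ≤ p) (hq : -1 < q) (t : ℝ) : coshPulse p q ω t ≤ p / (1 + q) :=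
  div_le_div_of_nonneg_left hp (by linarith) (by linarith [one_le_cosh (ω * t)])

lemma hasDerivAt_coshPulse (hq : -1 < q) (t : ℝ) :
    HasDerivAt (coshPulse p q ω) (coshPulseDeriv p q ω t) t := by
  have hden := (cosh_add_pos hq (ω * t)).ne'
  refine ((hasDerivAt_const t p).fun_div ((hasDerivAt_const_mul ω).cosh.add_const q)
    hden).congr_deriv ?_
  unfold coshPulseDeriv
  field_simp
  ring

lemma hasDerivAt_coshPulseDeriv (hq : -1 < q) (hω : ω ^ 2 = a) (hlin : (1 + a) * p = 3 * a * q)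
    (hquad : p ^ 2 = 2 * a * q ^ 2 - 2 * a) (t : ℝ) :
    HasDerivAt (coshPulseDeriv p q ω)
      (coshPulse p q ω t * (coshPulse p q ω t - 1) * (coshPulse p q ω t - a)) t := by
  have hden := cosh_add_pos hq (ω * t)
  have hnum :
      HasDerivAt (fun t => -(p * ω * sinh (ω * t))) (-(p * ω * (cosh (ω * t) * ω))) t :=
    ((hasDerivAt_const_mul ω).sinh.const_mul (p * ω)).neg
  refine (hnum.fun_div (((hasDerivAt_const_mul ω).cosh.add_const q).fun_pow 2)
    (by positivity)).congr_deriv ?_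
  unfold coshPulse
  have hpyth := cosh_sq (ω * t)
  set u := cosh (ω * t)
  set s := sinh (ω * t)
  rw [show p / (u + q) * (p / (u + q) - 1) * (p / (u + q) - a)
      = p * (p - (u + q)) * (p - a * (u + q)) / (u + q) ^ 3 by field_simp,
    div_eq_div_iff (by positivity) (by positivity)]
  push_cast
  linear_combination (-2 * p * ω ^ 2 * (u + q) ^ 4) * hpyth
    + (p * (u + q) ^ 4 * (u ^ 2 - q * u - 2)) * hω + (p * (u + q) ^ 5) * hlin
    - (p * (u + q) ^ 4) * hquad

lemma isAutSol_coshPulse (hq : -1 < q) (hω : ω ^ 2 = a) (hlin : (1 + a) * p = 3 * a * q)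
    (hquad : p ^ 2 = 2 * a * q ^ 2 - 2 * a) :
    IsAutSol a (coshPulse p q ω) (coshPulseDeriv p q ω) :=
  ⟨hasDerivAt_coshPulse hq, hasDerivAt_coshPulseDeriv hq hω hlin hquad⟩

lemma tendsto_coshPulse_cocompact (hq : 0 ≤ q) (hω : ω ≠ 0) :
    Tendsto (fun t => (coshPulse p q ω t, coshPulseDeriv p q ω t)) (cocompact ℝ)
      (𝓝 (0, 0)) := by
  have hden : Tendsto (fun t => cosh (ω * t) + q) (cocompact ℝ) atTop :=
    tendsto_atTop_add_const_right _ q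
      (tendsto_cosh_cocompact.comp (tendsto_cocompact_mul_left₀ hω))
  refine (hden.const_div_atTop p).prodMk_nhds (squeeze_zero_norm (fun t => ?_)
    (hden.const_div_atTop |p * ω|))
  have hpos := cosh_add_pos (by linarith) (ω * t)
  have hsinh : |sinh (ω * t)| ≤ cosh (ω * t) + q := by
    rw [abs_le]
    constructor <;> nlinarith [cosh_sq (ω * t), one_le_cosh (ω * t)]
  simp only [coshPulseDeriv, norm_div, norm_neg, norm_mul, Real.norm_eq_abs, abs_mul,
    abs_of_pos hpos, sq, ← div_div]
  gcongr
  exact div_le_of_le_mul₀ hpos.le (by positivity)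
    (by nlinarith [mul_nonneg (abs_nonneg p) (abs_nonneg ω)])

end Pulse

lemma Fa_div_one_add_eq_zero {a p q : ℝ} (hq : -1 < q) (hlin : (1 + a) * p = 3 * a * q)
    (hquad : p ^ 2 = 2 * a * q ^ 2 - 2 * a) : Fa a (p / (1 + q)) = 0 := by
  have hq' : 1 + q ≠ 0 := by linarith
  unfold Fa
  field_simp
  linear_combination (8 * p ^ 2 * (1 + q)) * hlin - 6 * p ^ 2 * hquad

lemma exists_pulse_params {a : ℝ} (h0 : 0 < a) (h1 : a < 1 / 2) :
    ∃ p q : ℝ, 0 < p ∧ p < q ∧ (1 + a) * p = 3 * a * q ∧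
      p ^ 2 = 2 * a * q ^ 2 - 2 * a := by
  have hden : 0 < (1 - 2 * a) * (2 - a) := by nlinarith
  -- eliminating `p` from the two relations leaves `(1 - 2a)(2 - a) q² = 2(1 + a)²`
  set q := √(2 * (1 + a) ^ 2 / ((1 - 2 * a) * (2 - a)))
  have hq2 : q ^ 2 * ((1 - 2 * a) * (2 - a)) = 2 * (1 + a) ^ 2 := by
    rw [sq_sqrt (by positivity), div_mul_cancel₀ _ hden.ne']
  have hq : 0 < q := sqrt_pos.2 (by positivity)
  refine ⟨3 * a * q / (1 + a), q, by positivity, ?_, by field_simp, ?_⟩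
  · rw [div_lt_iff₀ (by linarith)]
    nlinarith
  · field_simp
    linear_combination -hq2

theorem stmt_16_general (a za : ℝ) (h0 : 0 < a) (h1 : a < 1 / 2)
    (hzauniq : ∀ z ∈ Set.Ioo (0:ℝ) 1, Fa a z = 0 → z = za) :
    ∃ x dx : ℝ → ℝ, IsAutSol a x dx ∧
      -- nonconstant
      (∃ t₁ t₂ : ℝ, x t₁ ≠ x t₂) ∧
      -- homoclinic to (0,0)
      Tendsto (fun t => (x t, dx t)) atBot (nhds ((0:ℝ), (0:ℝ))) ∧
      Tendsto (fun t => (x t, dx t)) atTop (nhds ((0:ℝ), (0:ℝ))) ∧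
      -- 0 < x(t) ≤ z_a, with maximum value z_a attained
      (∀ t : ℝ, 0 < x t ∧ x t ≤ za) ∧
      (∃ t : ℝ, x t = za) := by
  obtain ⟨p, q, hp, hpq, hlin, hquad⟩ := exists_pulse_params h0 h1
  have hq : 0 < q := hp.trans hpq
  have hq' : -1 < q := by linarith
  have hmax : p / (1 + q) = za :=
    hzauniq _ ⟨by positivity, (div_lt_one (by linarith)).2 (by linarith)⟩
      (Fa_div_one_add_eq_zero hq' hlin hquad)
  have hza : 0 < za := hmax ▸ div_pos hp (by linarith)
  have hlim := tendsto_coshPulse_cocompact (p := p) hq.le (sqrt_pos.2 h0).ne'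
  have hlimTop := hlim.mono_left atTop_le_cocompact
  obtain ⟨t, ht⟩ := (hlimTop.fst_nhds.eventually (gt_mem_nhds hza)).exists
  refine ⟨coshPulse p q √a, coshPulseDeriv p q √a,
    isAutSol_coshPulse hq' (sq_sqrt h0.le) hlin hquad, ⟨t, 0, ?_⟩,
    hlim.mono_left atBot_le_cocompact, hlimTop,
    fun t => ⟨coshPulse_pos hp hq' t, hmax ▸ coshPulse_le hp.le hq' t⟩,
    ⟨0, coshPulse_zero.trans hmax⟩⟩
  rw [coshPulse_zero, hmax]
  exact ht.ne

theorem stmt_16 (a za : ℝ) (h0 : 0 < a) (h1 : a < 1 / 2)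
    (hza : za ∈ Set.Ioo (0:ℝ) 1) (hFza : Fa a za = 0)
    (hzauniq : ∀ z ∈ Set.Ioo (0:ℝ) 1, Fa a z = 0 → z = za) :
    ∃ x dx : ℝ → ℝ, IsAutSol a x dx ∧
      -- nonconstant
      (∃ t₁ t₂ : ℝ, x t₁ ≠ x t₂) ∧
      -- homoclinic to (0,0)
      Tendsto (fun t => (x t, dx t)) atBot (nhds ((0:ℝ), (0:ℝ))) ∧
      Tendsto (fun t => (x t, dx t)) atTop (nhds ((0:ℝ), (0:ℝ))) ∧
      -- 0 < x(t) ≤ z_a, with maximum value z_a attained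
      (∀ t : ℝ, 0 < x t ∧ x t ≤ za) ∧
      (∃ t : ℝ, x t = za) :=
  stmt_16_general a za h0 h1 hzauniq
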